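/- If A, B ∈ H²(O) are both nonnegative definite octonionic Hermitian 2x2 matrices, then their mixed determinant det(A,B) = (1/2)(a₁₁b₂₂ + a₂₂b₁₁ - 2 Re(a₁₂ b₂₁)) is nonnegative. -/

import Mathlib

noncomputable section

open Quaternion

/-- The octonions, as the Cayley–Dickson double of the quaternions. -/
@[ext] structure Octonion : Type where
  q1 : Quaternion ℝ
  q2 : Quaternion ℝ

namespace Octonion

def equivProd : Octonion ≃ Quaternion ℝ × Quaternion ℝ :=
  ⟨fun x => (x.q1, x.q2), fun p => ⟨p.1, p.2⟩, fun _ => rfl, fun _ => rfl⟩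

instance : AddCommGroup Octonion := equivProd.addCommGroup
instance : Module ℝ Octonion := equivProd.module ℝ
instance : TopologicalSpace Octonion :=
  TopologicalSpace.induced equivProd inferInstance

instance : One Octonion := ⟨⟨1, 0⟩⟩

/-- Cayley–Dickson multiplication: `(a,b)(c,d) = (ac - d̄b, da + b c̄)`. -/
instance : Mul Octonion :=
  ⟨fun x y => ⟨x.q1 * y.q1 - star y.q2 * x.q2, y.q2 * x.q1 + x.q2 * star y.q1⟩⟩

/-- Octonionic conjugation. -/
def conj (x : Octonion) : Octonion := ⟨star x.q1, -x.q2⟩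

/-- The real part of an octonion. -/
def re (x : Octonion) : ℝ := x.q1.re

/-- The imaginary part of an octonion. -/
def im (x : Octonion) : Octonion := (2⁻¹ : ℝ) • (x - conj x)

/-- The squared norm `|x|²` of an octonion. -/
def normSq (x : Octonion) : ℝ := Quaternion.normSq x.q1 + Quaternion.normSq x.q2

/-- The inverse of an octonion (junk value `0` at `0`). -/
def inv (x : Octonion) : Octonion := (normSq x)⁻¹ • conj x

end Octonion

namespace Octonion

/-- The Hermitian quadratic form `Re(ξ* A ξ)` of `A = [[a, x],[conj x, b]]` at `ξ = (ξ₁, ξ₂)`: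
`a|ξ₁|² + b|ξ₂|² + 2 Re(conj(ξ₁) x ξ₂)`. -/
def qform (a b : ℝ) (x : Octonion) (ξ₁ ξ₂ : Octonion) : ℝ :=
  a * normSq ξ₁ + b * normSq ξ₂ + 2 * re ((conj ξ₁ * x) * ξ₂)

/-- An octonionic Hermitian `2×2` matrix `[[d1, x],[conj x, d2]]`. -/
@[ext] structure Herm2 : Type where
  d1 : ℝ
  d2 : ℝ
  x : Octonion

namespace Herm2

instance : Add Herm2 := ⟨fun A B => ⟨A.d1 + B.d1, A.d2 + B.d2, A.x + B.x⟩⟩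
instance : SMul ℝ Herm2 := ⟨fun r A => ⟨r * A.d1, r * A.d2, r • A.x⟩⟩

/-- Nonnegative definiteness: `Re(ξ* A ξ) ≥ 0` for all `ξ ∈ O²`. -/
def PosSemidef (A : Herm2) : Prop := ∀ ξ₁ ξ₂ : Octonion, 0 ≤ qform A.d1 A.d2 A.x ξ₁ ξ₂

/-- Positive definiteness: `Re(ξ* A ξ) > 0` for all nonzero `ξ ∈ O²`. -/
def PosDef (A : Herm2) : Prop :=
  ∀ ξ₁ ξ₂ : Octonion, ¬(ξ₁ = 0 ∧ ξ₂ = 0) → 0 < qform A.d1 A.d2 A.x ξ₁ ξ₂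

/-- The determinant `det A = ab - |x|²`. -/
def det (A : Herm2) : ℝ := A.d1 * A.d2 - normSq A.x

/-- The mixed determinant `det(A,B) = (1/2)(a₁₁b₂₂ + a₂₂b₁₁ - 2 Re(a₁₂ b₂₁))`,
where `b₂₁ = conj(b₁₂)`. -/
def mixedDet (A B : Herm2) : ℝ :=
  (1 / 2) * (A.d1 * B.d2 + A.d2 * B.d1 - 2 * re (A.x * conj B.x))

end Herm2

end Octonion

/-! Identifying `O` with `ℍ × ℍ ≅ ℝ⁸`, `Re (x * conj y)` is the Euclidean inner product, so
Cauchy–Schwarz gives `Re (a₁₂ b₂₁)² ≤ |a₁₂|² |b₁₂|²`. Testing nonnegative definiteness on suitable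
vectors gives `a₁₁, a₂₂ ≥ 0` and `|a₁₂|² ≤ a₁₁ a₂₂`, and likewise for `B`. Hence
`Re (a₁₂ b₂₁)² ≤ (a₁₁ b₂₂)(a₂₂ b₁₁)`, and AM–GM bounds `2 Re (a₁₂ b₂₁)` by `a₁₁ b₂₂ + a₂₂ b₁₁`. -/

namespace Octonion

@[simp] lemma mul_q1 (x y : Octonion) : (x * y).q1 = x.q1 * y.q1 - star y.q2 * x.q2 := rfl
@[simp] lemma mul_q2 (x y : Octonion) : (x * y).q2 = y.q2 * x.q1 + x.q2 * star y.q1 := rfl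
@[simp] lemma conj_q1 (x : Octonion) : (conj x).q1 = star x.q1 := rfl
@[simp] lemma conj_q2 (x : Octonion) : (conj x).q2 = -x.q2 := rfl
@[simp] lemma neg_q1 (x : Octonion) : (-x).q1 = -x.q1 := rfl
@[simp] lemma neg_q2 (x : Octonion) : (-x).q2 = -x.q2 := rfl
@[simp] lemma smul_q1 (t : ℝ) (x : Octonion) : (t • x).q1 = t • x.q1 := rfl
@[simp] lemma smul_q2 (t : ℝ) (x : Octonion) : (t • x).q2 = t • x.q2 := rfl
@[simp] lemma zero_q1 : (0 : Octonion).q1 = 0 := rfl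
@[simp] lemma zero_q2 : (0 : Octonion).q2 = 0 := rfl
@[simp] lemma one_q1 : (1 : Octonion).q1 = 1 := rfl
@[simp] lemma one_q2 : (1 : Octonion).q2 = 0 := rfl

def toL2 (x : Octonion) : WithLp 2 (ℍ[ℝ] × ℍ[ℝ]) := WithLp.toLp 2 (x.q1, x.q2)

lemma re_mul_conj (x y : Octonion) : re (x * conj y) = inner ℝ (toL2 x) (toL2 y) := by
  simp only [WithLp.prod_inner_apply, toL2, Quaternion.inner_def, re, mul_q1, conj_q1, conj_q2,
    star_neg, neg_mul, sub_neg_eq_add, re_add, re_mul, re_star, imI_star, imJ_star, imK_star]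
  ring

lemma normSq_eq_re_mul_conj (x : Octonion) : normSq x = re (x * conj x) := by
  rw [re_mul_conj, WithLp.prod_inner_apply]
  simp only [toL2, normSq, real_inner_self_eq_norm_mul_norm, Quaternion.normSq_eq_norm_mul_self]

@[simp] lemma normSq_neg (x : Octonion) : normSq (-x) = normSq x := by
  simp [normSq]

@[simp] lemma normSq_conj (x : Octonion) : normSq (conj x) = normSq x := by
  simp [normSq]

lemma normSq_nonneg (x : Octonion) : 0 ≤ normSq x :=
  add_nonneg Quaternion.normSq_nonneg Quaternion.normSq_nonneg

lemma sq_re_mul_conj_le (x y : Octonion) : re (x * conj y) ^ 2 ≤ normSq x * normSq y := by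
  rw [sq, normSq_eq_re_mul_conj x, normSq_eq_re_mul_conj y, re_mul_conj, re_mul_conj, re_mul_conj]
  exact real_inner_mul_inner_self_le _ _

lemma re_mul_neg (x y : Octonion) : re (x * -y) = -re (x * y) := by
  simp only [re, mul_q1, neg_q1, neg_q2, star_neg, mul_neg, neg_mul, re_sub, re_neg]
  ring

lemma normSq_smul_one (t : ℝ) : normSq (t • 1 : Octonion) = t ^ 2 := by
  simp [normSq, Quaternion.normSq_smul]

lemma conj_smul_one_mul (t : ℝ) (x : Octonion) : conj (t • 1) * x = t • x := by
  ext <;> simp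

lemma re_smul_mul (t : ℝ) (x y : Octonion) : re ((t • x) * y) = t * re (x * y) := by
  simp only [re, mul_q1, smul_q1, smul_q2, smul_mul_assoc, mul_smul_comm, ← smul_sub, re_smul,
    smul_eq_mul]

lemma qform_smul_one (a b t : ℝ) (x ξ : Octonion) :
    qform a b x (t • 1) ξ = a * t ^ 2 + b * normSq ξ + 2 * t * re (x * ξ) := by
  rw [qform, normSq_smul_one, conj_smul_one_mul, re_smul_mul]
  ring

namespace Herm2

variable {A : Herm2}

lemma PosSemidef.d1_nonneg (hA : A.PosSemidef) : 0 ≤ A.d1 := by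
  have h := hA ((1 : ℝ) • 1) 0
  rw [qform_smul_one] at h
  simpa [normSq, re] using h

lemma PosSemidef.d2_nonneg (hA : A.PosSemidef) : 0 ≤ A.d2 := by
  have h := hA ((0 : ℝ) • 1) 1
  rw [qform_smul_one] at h
  simpa [normSq, re] using h

lemma PosSemidef.det_nonneg (hA : A.PosSemidef) : 0 ≤ A.det := by
  -- On `ξ = (t, -conj x)` the form is the quadratic `a t² - 2|x|² t + b|x|²`, with discriminant
  -- `-4 |x|² det A`.
  have hquad : ∀ t : ℝ, 0 ≤ A.d1 * (t * t) + (-2 * normSq A.x) * t + A.d2 * normSq A.x := by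
    intro t
    have h := hA (t • 1) (-conj A.x)
    rw [qform_smul_one, re_mul_neg, ← normSq_eq_re_mul_conj, normSq_neg, normSq_conj] at h
    linarith
  have hdisc := discrim_le_zero hquad
  have hmul : 0 ≤ normSq A.x * A.det := by
    rw [discrim] at hdisc
    rw [det]
    nlinarith
  rcases (normSq_nonneg A.x).eq_or_lt with hzero | hpos
  · rw [det, ← hzero, sub_zero]
    exact mul_nonneg hA.d1_nonneg hA.d2_nonneg
  · exact (mul_nonneg_iff_of_pos_left hpos).mp hmul

end Herm2

end Octonion

open Octonion in
/-- If `A, B` are nonnegative definite octonionic Hermitian `2×2` matrices,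
then their mixed determinant is nonnegative. -/
theorem herm2_mixedDet_nonneg (A B : Herm2) (hA : A.PosSemidef) (hB : B.PosSemidef) :
    0 ≤ A.mixedDet B := by
  have hr : re (A.x * conj B.x) ^ 2 ≤ (A.d1 * B.d2) * (A.d2 * B.d1) :=
    calc re (A.x * conj B.x) ^ 2 ≤ normSq A.x * normSq B.x := sq_re_mul_conj_le A.x B.x
      _ ≤ (A.d1 * A.d2) * (B.d1 * B.d2) :=
        mul_le_mul (sub_nonneg.mp hA.det_nonneg) (sub_nonneg.mp hB.det_nonneg)
          (normSq_nonneg B.x) (mul_nonneg hA.d1_nonneg hA.d2_nonneg)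
      _ = (A.d1 * B.d2) * (A.d2 * B.d1) := by ring
  have hamgm := two_mul_le_add_of_sq_le_mul (mul_nonneg hA.d1_nonneg hB.d2_nonneg)
    (mul_nonneg hA.d2_nonneg hB.d1_nonneg) hr
  rw [Herm2.mixedDet]
  linarith
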